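/- Let N ≥ 2 and x ∈ ℝ^N with 0 ≤ x_i ≤ 1 for all i, ∑_i x_i = 1, and sample standard deviation std(x) = √((1/(N-1))·∑_i (x_i − μ)²) = 1/√N, where μ = (1/N)∑_i x_i. Then exactly one entry of x equals 1 and all other entries equal 0. -/

import Mathlib

/-!
Squaring the standard-deviation condition and expanding the variance turns it into
`∑ xᵢ² = 1 = ∑ xᵢ`. Since `xᵢ - xᵢ² ≥ 0` on `[0, 1]`, every term of `∑ (xᵢ - xᵢ²) = 0` vanishes,
so each entry is `0` or `1`, and a `0/1` vector summing to `1` has exactly one entry equal to `1`.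
-/

open Finset

variable {ι : Type*} [Fintype ι]

theorem sum_sq_sub_mean_eq (x : ι → ℝ) :
    ∑ i, (x i - (1 / (Fintype.card ι : ℝ)) * ∑ j, x j) ^ 2
      = ∑ i, x i ^ 2 - (∑ i, x i) ^ 2 / Fintype.card ι := by
  rcases isEmpty_or_nonempty ι with _ | _
  · simp
  have hcard : (Fintype.card ι : ℝ) ≠ 0 := by exact_mod_cast Fintype.card_ne_zero
  simp only [sub_sq, sum_add_distrib, sum_sub_distrib, ← sum_mul, ← mul_sum, sum_const,
    card_univ, nsmul_eq_mul]
  field_simp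
  ring

theorem eq_zero_or_eq_one_of_sum_sq_eq_sum {x : ι → ℝ} (hbox : ∀ i, 0 ≤ x i ∧ x i ≤ 1)
    (h : ∑ i, x i ^ 2 = ∑ i, x i) (i : ι) : x i = 0 ∨ x i = 1 := by
  have hterm_nonneg : ∀ j ∈ univ, 0 ≤ x j - x j ^ 2 := fun j _ ↦ by
    nlinarith [hbox j]
  have hsum_zero : ∑ j, (x j - x j ^ 2) = 0 := by
    rw [sum_sub_distrib, h, sub_self]
  have hi : x i * (1 - x i) = 0 := by
    linear_combination (sum_eq_zero_iff_of_nonneg hterm_nonneg).1 hsum_zero i (mem_univ i)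
  rcases mul_eq_zero.1 hi with h0 | h1
  · exact .inl h0
  · exact .inr (by linarith)

theorem existsUnique_eq_one_of_sum_eq_one {x : ι → ℝ} (h01 : ∀ i, x i = 0 ∨ x i = 1)
    (hsum : ∑ i, x i = 1) : ∃! j, x j = 1 ∧ ∀ i, i ≠ j → x i = 0 := by
  have hnonneg : ∀ i ∈ univ, 0 ≤ x i := fun i _ ↦ by rcases h01 i with h | h <;> simp [h]
  obtain ⟨j, hj⟩ : ∃ j, x j ≠ 0 := by
    by_contra! h
    simp [h] at hsum
  have hxj : x j = 1 := (h01 j).resolve_left hj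
  have hrest : ∀ i, i ≠ j → x i = 0 := fun i hij ↦ by
    have := add_le_sum hnonneg (mem_univ i) (mem_univ j) hij
    rcases h01 i with h | h
    · exact h
    · linarith
  refine ⟨j, ⟨hxj, hrest⟩, fun k ⟨hxk, _⟩ ↦ ?_⟩
  by_contra hkj
  simp [hrest k hkj] at hxk

theorem stmt_0 (N : ℕ) (hN : 2 ≤ N) (x : Fin N → ℝ)
    (hbox : ∀ i, 0 ≤ x i ∧ x i ≤ 1)
    (hsum : ∑ i, x i = 1)
    (hstd : Real.sqrt ((1 / ((N : ℝ) - 1)) * ∑ i, (x i - (1 / (N : ℝ)) * ∑ j, x j) ^ 2)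
      = 1 / Real.sqrt N) :
    ∃! j : Fin N, x j = 1 ∧ ∀ i, i ≠ j → x i = 0 := by
  have hN1 : (0 : ℝ) < N - 1 := by
    have : (2 : ℝ) ≤ N := by exact_mod_cast hN
    linarith
  have hvar : (1 / ((N : ℝ) - 1)) * (∑ i, x i ^ 2 - 1 / N) = 1 / N := by
    have := sum_sq_sub_mean_eq x
    simp only [Fintype.card_fin, hsum, one_pow] at this
    rwa [hsum, this, one_div (Real.sqrt _), ← Real.sqrt_inv, Real.sqrt_inj, ← one_div] at hstd
    · exact mul_nonneg (one_div_nonneg.2 hN1.le) (by rw [← this]; positivity)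
    · positivity
  have hsq : ∑ i, x i ^ 2 = ∑ i, x i := by
    rw [hsum]
    field_simp [hN1.ne'] at hvar
    nlinarith
  exact existsUnique_eq_one_of_sum_eq_one (eq_zero_or_eq_one_of_sum_sq_eq_sum hbox hsq) hsum
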